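/- arXiv:1509.06472 — 5 statements merged into one kernel-verified Lean document; each statement's English description precedes it below -/
import Mathlib

section
/- Let H ∈ (1/2, 1) and let s < t be real numbers. Then the function q ↦ (t−q)^{H−1/2} − (s−q)^{H−1/2} is square integrable over the interval (−∞, s), i.e. ∫_{−∞}^{s} ((t−q)^{H−1/2} − (s−q)^{H−1/2})² dq < ∞. -/
open Real MeasureTheory Set

theorem mvn_kernel_sq_integrable (H : ℝ) (hH : H ∈ Set.Ioo (1/2 : ℝ) 1)
    (s t : ℝ) (hst : s < t) :
    MeasureTheory.IntegrableOn
      (fun q : ℝ => ((t - q) ^ (H - 1/2) - (s - q) ^ (H - 1/2))^2)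
      (Set.Iio s) := by
  obtain ⟨hH1, hH2⟩ := hH
  have ha0 : 0 < H - 1/2 := by linarith
  have ha1 : H - 1/2 < 1/2 := by linarith
  -- split the domain
  have hsplit : Set.Iio s = Set.Iio (s - 1) ∪ Set.Ico (s - 1) s := by
    rw [Set.Iio_union_Ico_eq_Iio (by linarith)]
  rw [hsplit]
  apply MeasureTheory.IntegrableOn.union
  · -- tail part: dominate by ((H-1/2)*(t-s))^2 * (s-q)^(2*((H-1/2)-1))
    have hmeas : AEStronglyMeasurable
        (fun q : ℝ => ((t - q) ^ (H - 1/2) - (s - q) ^ (H - 1/2))^2)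
        (volume.restrict (Set.Iio (s - 1))) := by
      apply Measurable.aestronglyMeasurable
      have h1 : Measurable fun q : ℝ => (t - q) ^ (H - 1/2) :=
        ((Real.continuous_rpow_const (le_of_lt ha0)).comp
          (continuous_const.sub continuous_id)).measurable
      have h2 : Measurable fun q : ℝ => (s - q) ^ (H - 1/2) :=
        ((Real.continuous_rpow_const (le_of_lt ha0)).comp
          (continuous_const.sub continuous_id)).measurable
      exact (h1.sub h2).pow_const 2
    have hg : MeasureTheory.IntegrableOn
        (fun q : ℝ => ((H - 1/2) * (t - s))^2 * (s - q) ^ (2 * ((H - 1/2) - 1)))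
        (Set.Iio (s - 1)) := by
      apply MeasureTheory.Integrable.const_mul
      have hpre : (fun q : ℝ => s - q) ⁻¹' (Set.Ioi (1:ℝ)) = Set.Iio (s - 1) := by
        ext x; simp only [Set.mem_preimage, Set.mem_Ioi, Set.mem_Iio]
        constructor <;> intro <;> linarith
      have hmp := MeasureTheory.Measure.measurePreserving_sub_left (volume : Measure ℝ) s
      have hme : MeasurableEmbedding (fun q : ℝ => s - q) :=
        (Homeomorph.subLeft s).measurableEmbedding
      have := (hmp.integrableOn_comp_preimage hme
        (f := fun u : ℝ => u ^ (2 * ((H - 1/2) - 1))) (s := Set.Ioi (1:ℝ))).mpr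
        (integrableOn_Ioi_rpow_of_lt (by linarith) one_pos)
      rwa [hpre] at this
    apply hg.mono' hmeas
    filter_upwards [MeasureTheory.ae_restrict_mem measurableSet_Iio] with q hq
    have hu : (1:ℝ) < s - q := by simp only [Set.mem_Iio] at hq; linarith
    have hu0 : (0:ℝ) < s - q := by linarith
    have huv : s - q < t - q := by linarith
    -- MVT
    obtain ⟨c, hc, hceq⟩ := exists_hasDerivAt_eq_slope (fun x : ℝ => x ^ (H - 1/2))
      (fun x => (H - 1/2) * x ^ ((H - 1/2) - 1)) huv
      (by
        apply ContinuousOn.rpow_const continuousOn_id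
        intro x hx
        exact Or.inl (ne_of_gt (lt_of_lt_of_le hu0 ((Set.mem_Icc.mp hx).1)))
      )
      (fun x hx => Real.hasDerivAt_rpow_const
        (Or.inl (ne_of_gt (lt_trans hu0 hx.1))))
    have hc0 : 0 < c := lt_trans hu0 hc.1
    have hts : t - s ≠ 0 := by linarith
    have h1 : (t - q) - (s - q) = t - s := by ring
    rw [h1] at hceq
    have hdiff : (t - q) ^ (H - 1/2) - (s - q) ^ (H - 1/2)
        = (H - 1/2) * c ^ ((H - 1/2) - 1) * (t - s) := by
      rw [hceq]; field_simp
    have hcb : c ^ ((H - 1/2) - 1) ≤ (s - q) ^ ((H - 1/2) - 1) :=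
      Real.rpow_le_rpow_of_nonpos hu0 (le_of_lt hc.1) (by linarith)
    have hnonneg : 0 ≤ (t - q) ^ (H - 1/2) - (s - q) ^ (H - 1/2) := by
      have := Real.rpow_le_rpow (le_of_lt hu0) (le_of_lt huv) (le_of_lt ha0)
      linarith
    have hbound : (t - q) ^ (H - 1/2) - (s - q) ^ (H - 1/2)
        ≤ (H - 1/2) * (t - s) * (s - q) ^ ((H - 1/2) - 1) := by
      rw [hdiff]
      have : (H - 1/2) * c ^ ((H - 1/2) - 1) * (t - s)
          ≤ (H - 1/2) * (s - q) ^ ((H - 1/2) - 1) * (t - s) := by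
        apply mul_le_mul_of_nonneg_right _ (by linarith)
        exact mul_le_mul_of_nonneg_left hcb (le_of_lt ha0)
      linarith
    rw [Real.norm_eq_abs, abs_of_nonneg (sq_nonneg _)]
    have hrhs : ((H - 1/2) * (t - s) * (s - q) ^ ((H - 1/2) - 1))^2
        = ((H - 1/2) * (t - s))^2 * (s - q) ^ (2 * ((H - 1/2) - 1)) := by
      rw [mul_pow, sq ((s - q) ^ ((H - 1/2) - 1)), ← Real.rpow_add hu0]
      ring_nf
    rw [← hrhs]
    exact pow_le_pow_left₀ hnonneg hbound 2
  · -- bounded part: continuous on a compact interval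
    have hcont : ContinuousOn
        (fun q : ℝ => ((t - q) ^ (H - 1/2) - (s - q) ^ (H - 1/2))^2)
        (Set.Icc (s - 1) s) := by
      apply ContinuousOn.pow
      apply ContinuousOn.sub
      · exact ((continuous_const.sub continuous_id).continuousOn).rpow_const
          (fun x _ => Or.inr (le_of_lt ha0))
      · exact ((continuous_const.sub continuous_id).continuousOn).rpow_const
          (fun x _ => Or.inr (le_of_lt ha0))
    exact (hcont.integrableOn_compact isCompact_Icc).mono_set Set.Ico_subset_Icc_self
end

section
/- Let Γ denote the Gamma function and for H ∈ (1/2, 1) set c_H = √(2H·Γ(3/2−H) / (Γ(1/2+H)·Γ(2−2H))). Then for all real s < t, c_H² · ( ∫_s^t (t−q)^{2H−1} dq + ∫_{−∞}^s ((t−q)^{H−1/2} − (s−q)^{H−1/2})² dq ) = (t−s)^{2H}. -/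
/-! Put `a = H - 1/2`. The first integral is elementary, and the substitution `q = s - (t - s) u`
turns the second one into `(t - s)^(2H) ∫_0^∞ ((1 + u)^a - u^a)^2 du`. This integral follows from
the fundamental theorem of calculus: `((1 + u)^a - u^a) ((1 + u)^(a+1) - u^(a+1))` is `1` at `0`,
tends to `0` at infinity (as `a < 1/2`), and has derivative
`(2a + 1) ((1 + u)^a - u^a)^2 - a u^(a-1) (1 + u)^(a-1)`, where the last term integrates to the
Beta value `a Γ(a) Γ(1 - 2a) / Γ(1 - a)` (Beta integral of the second kind, obtained from the usual
one by `x = u / (1 + u)`). -/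

open Real MeasureTheory Set

noncomputable def cH (H : ℝ) : ℝ :=
  Real.sqrt (2 * H * Real.Gamma (3/2 - H) / (Real.Gamma (1/2 + H) * Real.Gamma (2 - 2*H)))

open Filter Topology

theorem ofReal_rpow_mul_one_sub_rpow {p q x : ℝ} (hx : x ∈ Icc (0 : ℝ) 1) :
    (((x ^ (p - 1) * (1 - x) ^ (q - 1) : ℝ)) : ℂ)
      = (x : ℂ) ^ ((p : ℂ) - 1) * (1 - (x : ℂ)) ^ ((q : ℂ) - 1) := by
  push_cast
  rw [Complex.ofReal_cpow hx.1, Complex.ofReal_cpow (sub_nonneg.mpr hx.2)]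
  push_cast
  rfl

theorem integral_Ioo_rpow_mul_one_sub_rpow {p q : ℝ} (hp : 0 < p) (hq : 0 < q) :
    ∫ x in Ioo 0 1, x ^ (p - 1) * (1 - x) ^ (q - 1) = Gamma p * Gamma q / Gamma (p + q) := by
  rw [← ProbabilityTheory.beta, ProbabilityTheory.beta_eq_betaIntegralReal p q hp hq,
    Complex.betaIntegral, ← integral_Ioc_eq_integral_Ioo,
    ← intervalIntegral.integral_of_le zero_le_one, ← Complex.ofReal_re (∫ x in (0 : ℝ)..1, _),
    ← intervalIntegral.integral_ofReal]
  congr 1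
  refine intervalIntegral.integral_congr fun x hx => ?_
  exact ofReal_rpow_mul_one_sub_rpow (by rwa [uIcc_of_le zero_le_one] at hx)

theorem integrableOn_Ioo_rpow_mul_one_sub_rpow {p q : ℝ} (hp : 0 < p) (hq : 0 < q) :
    IntegrableOn (fun x : ℝ => x ^ (p - 1) * (1 - x) ^ (q - 1)) (Ioo 0 1) := by
  have h := Complex.betaIntegral_convergent (u := p) (v := q) (by simpa) (by simpa)
  rw [intervalIntegrable_iff_integrableOn_Ioc_of_le zero_le_one] at h
  refine (IntegrableOn.congr_fun h.re (fun x hx => ?_) measurableSet_Ioc).mono_set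
    Ioo_subset_Ioc_self
  rw [RCLike.re_to_complex, ← ofReal_rpow_mul_one_sub_rpow (Ioc_subset_Icc_self hx),
    Complex.ofReal_re]

theorem image_div_one_add_Ioi : (fun u : ℝ => u / (1 + u)) '' Ioi 0 = Ioo 0 1 := by
  ext x
  constructor
  · rintro ⟨u, hu : 0 < u, rfl⟩
    exact ⟨by positivity, (div_lt_one (by positivity)).mpr (by linarith)⟩
  · rintro ⟨hx0, hx1⟩
    refine ⟨x / (1 - x), div_pos hx0 (by linarith), ?_⟩
    have : 1 - x ≠ 0 := by linarith
    field_simp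
    ring

theorem hasDerivWithinAt_div_one_add :
    ∀ u ∈ Ioi (0 : ℝ), HasDerivWithinAt (fun u : ℝ => u / (1 + u)) ((1 + u) ^ 2)⁻¹ (Ioi 0) u := by
  intro u (hu : 0 < u)
  have hu₁ : 1 + u ≠ 0 := by linarith
  refine ((hasDerivAt_id u).div ((hasDerivAt_id u).const_add 1) hu₁).hasDerivWithinAt.congr_deriv
    ?_
  simp only [id]
  field_simp
  ring

theorem injOn_div_one_add : InjOn (fun u : ℝ => u / (1 + u)) (Ioi 0) := by
  intro u (hu : 0 < u) v (hv : 0 < v) huv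
  have hu₁ : 1 + u ≠ 0 := by linarith
  have hv₁ : 1 + v ≠ 0 := by linarith
  field_simp at huv
  linarith

theorem abs_deriv_smul_rpow_mul_one_sub_rpow {p q u : ℝ} (hu : 0 < u) :
    |((1 + u) ^ 2)⁻¹| • ((u / (1 + u)) ^ (p - 1) * (1 - u / (1 + u)) ^ (q - 1))
      = u ^ (p - 1) * (1 + u) ^ (-(p + q)) := by
  have hu₁ : 0 < 1 + u := by linarith
  have hsplit : (1 + u) ^ (p + q) = (1 + u) ^ (p - 1) * (1 + u) ^ (q - 1) * (1 + u) ^ 2 := by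
    rw [← rpow_add hu₁, ← rpow_natCast, ← rpow_add hu₁]
    ring_nf
  rw [smul_eq_mul, abs_of_pos (by positivity),
    show 1 - u / (1 + u) = (1 + u)⁻¹ by field_simp; ring, div_rpow hu.le hu₁.le,
    inv_rpow hu₁.le, rpow_neg hu₁.le, hsplit]
  field_simp

theorem integral_Ioi_rpow_mul_one_add_rpow {p q : ℝ} (hp : 0 < p) (hq : 0 < q) :
    ∫ u in Ioi 0, u ^ (p - 1) * (1 + u) ^ (-(p + q)) = Gamma p * Gamma q / Gamma (p + q) := by
  rw [← integral_Ioo_rpow_mul_one_sub_rpow hp hq, ← image_div_one_add_Ioi,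
    integral_image_eq_integral_abs_deriv_smul measurableSet_Ioi hasDerivWithinAt_div_one_add
      injOn_div_one_add]
  exact setIntegral_congr_fun measurableSet_Ioi fun u hu =>
    (abs_deriv_smul_rpow_mul_one_sub_rpow hu).symm

theorem integrableOn_Ioi_rpow_mul_one_add_rpow {p q : ℝ} (hp : 0 < p) (hq : 0 < q) :
    IntegrableOn (fun u : ℝ => u ^ (p - 1) * (1 + u) ^ (-(p + q))) (Ioi 0) := by
  have h := integrableOn_Ioo_rpow_mul_one_sub_rpow hp hq
  rw [← image_div_one_add_Ioi, integrableOn_image_iff_integrableOn_abs_deriv_smul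
    measurableSet_Ioi hasDerivWithinAt_div_one_add injOn_div_one_add] at h
  exact h.congr_fun (fun u hu => abs_deriv_smul_rpow_mul_one_sub_rpow hu) measurableSet_Ioi

noncomputable def rpowGap (a u : ℝ) : ℝ := (1 + u) ^ a - u ^ a

theorem rpowGap_nonneg {a u : ℝ} (ha : 0 ≤ a) (hu : 0 ≤ u) : 0 ≤ rpowGap a u :=
  sub_nonneg.mpr (rpow_le_rpow hu (by linarith) ha)

theorem rpowGap_le {a u : ℝ} (ha₀ : 0 ≤ a) (ha₁ : a ≤ 1) (hu : 0 < u) :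
    rpowGap a u ≤ a * u ^ (a - 1) := by
  have hbernoulli : (1 + u⁻¹) ^ a ≤ 1 + a * u⁻¹ :=
    rpow_one_add_le_one_add_mul_self (by linarith [inv_pos.mpr hu]) ha₀ ha₁
  have hfactor : (1 + u) ^ a = u ^ a * (1 + u⁻¹) ^ a := by
    rw [← mul_rpow hu.le (by positivity), mul_add, mul_inv_cancel₀ hu.ne', mul_one, add_comm]
  calc rpowGap a u = u ^ a * ((1 + u⁻¹) ^ a - 1) := by rw [rpowGap, hfactor]; ring
    _ ≤ u ^ a * (a * u⁻¹) := by gcongr; linarith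
    _ = a * u ^ (a - 1) := by rw [rpow_sub_one hu.ne']; ring

theorem continuous_rpowGap {a : ℝ} (ha : 0 ≤ a) : Continuous (rpowGap a) := by
  unfold rpowGap
  fun_prop (disch := exact ha)

theorem hasDerivAt_rpowGap (a : ℝ) {x : ℝ} (hx : 0 < x) :
    HasDerivAt (rpowGap a) (a * rpowGap (a - 1) x) x := by
  have h₁ : HasDerivAt (fun u : ℝ => (1 + u) ^ a) (a * (1 + x) ^ (a - 1)) x := by
    simpa using ((hasDerivAt_id x).const_add 1).rpow_const (p := a)
      (Or.inl (show 1 + x ≠ 0 by linarith))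
  exact (h₁.sub (hasDerivAt_rpow_const (Or.inl hx.ne'))).congr_deriv (by rw [rpowGap]; ring)

theorem rpowGap_sub_one_mul_rpowGap_add_one (a : ℝ) {x : ℝ} (hx : 0 < x) :
    rpowGap (a - 1) x * rpowGap (a + 1) x
      = rpowGap a x ^ 2 - x ^ (a - 1) * (1 + x) ^ (a - 1) := by
  obtain ⟨b, rfl⟩ : ∃ b, a = b + 1 := ⟨a - 1, by ring⟩
  simp only [rpowGap, add_sub_cancel_right, rpow_add_one hx.ne',
    rpow_add_one (show 1 + x ≠ 0 by linarith)]
  ring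

theorem rpowGap_add_one {a u : ℝ} (hu : 0 < u) :
    rpowGap (a + 1) u = u * rpowGap a u + (1 + u) ^ a := by
  simp only [rpowGap, rpow_add_one hu.ne', rpow_add_one (show 1 + u ≠ 0 by linarith)]
  ring

theorem integrableOn_Ioi_rpowGap_sq {a : ℝ} (ha₀ : 0 ≤ a) (ha : a < 1 / 2) :
    IntegrableOn (fun u => rpowGap a u ^ 2) (Ioi 0) := by
  have hcont : Continuous (fun u => rpowGap a u ^ 2) := (continuous_rpowGap ha₀).pow 2
  rw [← Ioc_union_Ioi_eq_Ioi zero_le_one]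
  refine hcont.integrableOn_Ioc.union (Integrable.mono' ((integrableOn_Ioi_rpow_of_lt
    (show 2 * a - 2 < -1 by linarith) one_pos).const_mul (a ^ 2))
    hcont.aestronglyMeasurable.restrict ?_)
  filter_upwards [ae_restrict_mem measurableSet_Ioi] with u (hu : 1 < u)
  have hu₀ : 0 < u := by linarith
  rw [norm_pow, Real.norm_of_nonneg (rpowGap_nonneg ha₀ hu₀.le)]
  calc rpowGap a u ^ 2 ≤ (a * u ^ (a - 1)) ^ 2 := by
        gcongr
        exacts [rpowGap_nonneg ha₀ hu₀.le, rpowGap_le ha₀ (by linarith) hu₀]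
    _ = a ^ 2 * u ^ (2 * a - 2) := by
        rw [mul_pow, ← rpow_mul_natCast hu₀.le]; ring_nf

theorem tendsto_rpowGap_mul_rpowGap_add_one {a : ℝ} (ha₀ : 0 ≤ a) (ha : a < 1 / 2) :
    Tendsto (fun u => rpowGap a u * rpowGap (a + 1) u) atTop (𝓝 0) := by
  have hbound : Tendsto (fun u : ℝ => (a ^ 2 + a * 2 ^ a) * u ^ (2 * a - 1)) atTop (𝓝 0) := by
    simpa using (tendsto_rpow_neg_atTop (show 0 < 1 - 2 * a by linarith)).const_mul
      (a ^ 2 + a * 2 ^ a)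
  refine tendsto_of_tendsto_of_tendsto_of_le_of_le' tendsto_const_nhds hbound ?_ ?_
  all_goals filter_upwards [eventually_ge_atTop 1] with u hu
  all_goals have hu₀ : 0 < u := by linarith
  all_goals rw [rpowGap_add_one hu₀]
  · exact mul_nonneg (rpowGap_nonneg ha₀ hu₀.le) (by positivity [rpowGap_nonneg ha₀ hu₀.le])
  · have hg := rpowGap_le ha₀ (by linarith) hu₀
    have hpow : (1 + u) ^ a ≤ 2 ^ a * u ^ a := by
      rw [← mul_rpow zero_le_two hu₀.le]
      exact rpow_le_rpow (by linarith) (by linarith) ha₀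
    calc rpowGap a u * (u * rpowGap a u + (1 + u) ^ a)
        ≤ a * u ^ (a - 1) * (u * (a * u ^ (a - 1)) + 2 ^ a * u ^ a) := by
          have := rpowGap_nonneg ha₀ hu₀.le
          gcongr
      _ = (a ^ 2 + a * 2 ^ a) * u ^ (2 * a - 1) := by
          rw [show 2 * a - 1 = a - 1 + a by ring, rpow_add hu₀, rpow_sub_one hu₀.ne']
          field_simp

theorem one_add_mul_integral_rpowGap_sq {a : ℝ} (ha₀ : 0 < a) (ha : a < 1 / 2) :
    1 + (2 * a + 1) * ∫ u in Ioi 0, rpowGap a u ^ 2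
      = Gamma (a + 1) * Gamma (1 - 2 * a) / Gamma (1 - a) := by
  have hW := integral_Ioi_rpow_mul_one_add_rpow ha₀ (q := 1 - 2 * a) (by linarith)
  have hWint := integrableOn_Ioi_rpow_mul_one_add_rpow ha₀ (q := 1 - 2 * a) (by linarith)
  rw [show -(a + (1 - 2 * a)) = a - 1 by ring] at hW hWint
  rw [show a + (1 - 2 * a) = 1 - a by ring] at hW
  have hderiv : ∀ x ∈ Ioi (0 : ℝ), HasDerivAt (fun u => rpowGap a u * rpowGap (a + 1) u)
      ((2 * a + 1) * rpowGap a x ^ 2 - a * (x ^ (a - 1) * (1 + x) ^ (a - 1))) x := by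
    intro x hx
    refine ((hasDerivAt_rpowGap a hx).mul (hasDerivAt_rpowGap (a + 1) hx)).congr_deriv ?_
    rw [add_sub_cancel_right]
    linear_combination a * rpowGap_sub_one_mul_rpowGap_add_one a hx
  have hcont : Continuous (fun u => rpowGap a u * rpowGap (a + 1) u) :=
    (continuous_rpowGap ha₀.le).mul (continuous_rpowGap (by linarith))
  have hFTC := integral_Ioi_of_hasDerivAt_of_tendsto hcont.continuousWithinAt hderiv
    (((integrableOn_Ioi_rpowGap_sq ha₀.le ha).const_mul _).sub (hWint.const_mul a))
    (tendsto_rpowGap_mul_rpowGap_add_one ha₀.le ha)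
  have hzero : rpowGap a 0 * rpowGap (a + 1) 0 = 1 := by
    simp [rpowGap, zero_rpow ha₀.ne', zero_rpow (show a + 1 ≠ 0 by linarith)]
  rw [integral_sub ((integrableOn_Ioi_rpowGap_sq ha₀.le ha).const_mul _) (hWint.const_mul a),
    integral_const_mul, integral_const_mul, hW, hzero] at hFTC
  rw [Gamma_add_one ha₀.ne']
  linear_combination hFTC

theorem integral_Iio_eq_smul_integral_Ioi {E : Type*} [NormedAddCommGroup E] [NormedSpace ℝ E]
    (f : ℝ → E) (s : ℝ) {c : ℝ} (hc : 0 < c) :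
    ∫ q in Iio s, f q = c • ∫ u in Ioi 0, f (s - c * u) := by
  have hreflect : ∫ v in Ioi 0, f (s - v) = ∫ q in Iio s, f q := by
    simpa using (volume.measurePreserving_sub_left s).setIntegral_preimage_emb
      (Homeomorph.subLeft s).measurableEmbedding f (Iio s)
  rw [← hreflect, integral_comp_mul_left_Ioi (fun v => f (s - v)) 0 hc, mul_zero, smul_smul,
    mul_inv_cancel₀ hc.ne', one_smul]

theorem integral_Iio_sq_rpow_sub_rpow (a : ℝ) {s t : ℝ} (hst : s < t) :
    ∫ q in Iio s, ((t - q) ^ a - (s - q) ^ a) ^ 2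
      = (t - s) ^ (2 * a + 1) * ∫ u in Ioi 0, rpowGap a u ^ 2 := by
  have hc : 0 < t - s := by linarith
  have hscale : ∀ u ∈ Ioi (0 : ℝ),
      ((t - (s - (t - s) * u)) ^ a - (s - (s - (t - s) * u)) ^ a) ^ 2
        = (t - s) ^ (2 * a) * rpowGap a u ^ 2 := fun u (hu : 0 < u) => by
    rw [show t - (s - (t - s) * u) = (t - s) * (1 + u) by ring,
      show s - (s - (t - s) * u) = (t - s) * u by ring, mul_rpow hc.le (by linarith),
      mul_rpow hc.le hu.le, rpowGap, mul_comm 2 a, rpow_mul hc.le, rpow_two]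
    ring
  rw [integral_Iio_eq_smul_integral_Ioi _ s hc, smul_eq_mul,
    setIntegral_congr_fun measurableSet_Ioi hscale, integral_const_mul, rpow_add_one hc.ne']
  ring

theorem integral_Ioc_rpow_sub {r : ℝ} (hr : -1 < r) {s t : ℝ} (hst : s ≤ t) :
    ∫ q in Ioc s t, (t - q) ^ r = (t - s) ^ (r + 1) / (r + 1) := by
  rw [← intervalIntegral.integral_of_le hst,
    intervalIntegral.integral_comp_sub_left (fun x : ℝ => x ^ r) t, sub_self,
    integral_rpow (Or.inl hr), zero_rpow (by linarith), sub_zero]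

theorem mvn_increment_variance (H : ℝ) (hH : H ∈ Set.Ioo (1/2 : ℝ) 1)
    (s t : ℝ) (hst : s < t) :
    (cH H)^2 *
      ((∫ q in Set.Ioc s t, (t - q) ^ (2*H - 1)) +
       (∫ q in Set.Iio s, ((t - q) ^ (H - 1/2) - (s - q) ^ (H - 1/2))^2))
      = (t - s) ^ (2*H) := by
  obtain ⟨a, rfl⟩ : ∃ a, H = a + 1 / 2 := ⟨H - 1 / 2, by ring⟩
  obtain ⟨ha₀, ha⟩ : 0 < a ∧ a < 1 / 2 := ⟨by linarith [hH.1], by linarith [hH.2]⟩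
  have hΓ₁ := Gamma_pos_of_pos (show 0 < a + 1 by linarith)
  have hΓ₂ := Gamma_pos_of_pos (show 0 < 1 - a by linarith)
  have hΓ₃ := Gamma_pos_of_pos (show 0 < 1 - 2 * a by linarith)
  have hcH : cH (a + 1 / 2) ^ 2
      = (2 * a + 1) * Gamma (1 - a) / (Gamma (a + 1) * Gamma (1 - 2 * a)) := by
    rw [cH, show 3 / 2 - (a + 1 / 2) = 1 - a by ring, show 1 / 2 + (a + 1 / 2) = a + 1 by ring,
      show 2 - 2 * (a + 1 / 2) = 1 - 2 * a by ring, sq_sqrt (by positivity)]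
    ring
  rw [show a + 1 / 2 - 1 / 2 = a by ring, show 2 * (a + 1 / 2) - 1 = 2 * a by ring,
    show 2 * (a + 1 / 2) = 2 * a + 1 by ring, integral_Ioc_rpow_sub (by linarith) hst.le,
    integral_Iio_sq_rpow_sub_rpow a hst, hcH]
  have hJ := one_add_mul_integral_rpowGap_sq ha₀ ha
  rw [eq_div_iff hΓ₂.ne'] at hJ
  field_simp
  linear_combination (t - s) ^ (2 * a + 1) * hJ
end

section
/- Let H ∈ (1/2, 1) and let s < t be real numbers. Then lim_{δ → 0} ∫_{−∞}^{s} ( ((t+δ−q)^{H−1/2} − (t−q)^{H−1/2}) / δ − (H−1/2)(t−q)^{H−3/2} )² dq = 0, where the limit is over real δ ≠ 0 with t + δ > s. -/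
/-!
Dominated convergence. Pointwise, the difference quotient of `x ↦ x ^ p` at `x = t - q > 0`
tends to its derivative. For `|δ| ≤ (t - s) / 2` both `t - q` and `t + δ - q` lie in
`[(t - q) / 2, ∞)`, where the derivative of `x ^ p` is bounded by `|p| ((t - q) / 2) ^ (p - 1)`
(as `p ≤ 1`), so the mean value theorem dominates the integrand by a multiple of
`(t - q) ^ (2p - 2)`. This is integrable at `-∞` exactly when `p < 1/2`, i.e. `H < 1`.
-/

open Real MeasureTheory Set Filter Topology

lemma integrableOn_Iio_sub_rpow {s t r : ℝ} (hst : s < t) (hr : r < -1) :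
    IntegrableOn (fun q => (t - q) ^ r) (Iio s) := by
  have h := ((integrable_indicator_iff measurableSet_Ioi).mpr
    (integrableOn_Ioi_rpow_of_lt hr (sub_pos.mpr hst))).comp_sub_left t
  refine h.integrableOn.congr_fun (fun q hq => ?_) measurableSet_Iio
  have hq : t - s < t - q := by linarith [mem_Iio.mp hq]
  simp [indicator_of_mem (mem_Ioi.mpr hq)]

lemma abs_rpow_sub_rpow_le {p c a b : ℝ} (hp : p ≤ 1) (hc : 0 < c) (ha : c ≤ a)
    (hb : c ≤ b) : |a ^ p - b ^ p| ≤ |p| * c ^ (p - 1) * |a - b| := by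
  have hderiv : ∀ x ∈ Ici c,
      HasDerivWithinAt (fun x : ℝ => x ^ p) (p * x ^ (p - 1)) (Ici c) x :=
    fun x hx => (hasDerivAt_rpow_const (Or.inl (hc.trans_le hx).ne')).hasDerivWithinAt
  have hbound : ∀ x ∈ Ici c, ‖p * x ^ (p - 1)‖ ≤ |p| * c ^ (p - 1) := fun x hx => by
    rw [norm_mul, norm_eq_abs, norm_eq_abs, abs_of_pos (rpow_pos_of_pos (hc.trans_le hx) _)]
    exact mul_le_mul_of_nonneg_left
      (rpow_le_rpow_of_nonpos hc hx (sub_nonpos.mpr hp)) (abs_nonneg p)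
  exact (convex_Ici c).norm_image_sub_le_of_norm_hasDerivWithin_le hderiv hbound hb ha

lemma abs_rpow_slope_sub_deriv_le {p x δ : ℝ} (hp : p ≤ 1) (hx : 0 < x)
    (hδ : |δ| ≤ x / 2) :
    |((x + δ) ^ p - x ^ p) / δ - p * x ^ (p - 1)| ≤ 2 * |p| * 2 ^ (1 - p) * x ^ (p - 1) := by
  have hx2 : 0 < x / 2 := by positivity
  have hhalf : (x / 2) ^ (p - 1) = 2 ^ (1 - p) * x ^ (p - 1) := by
    rw [div_rpow hx.le zero_le_two, div_eq_mul_inv, ← rpow_neg zero_le_two, neg_sub, mul_comm]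
  have hslope : |((x + δ) ^ p - x ^ p) / δ| ≤ |p| * (x / 2) ^ (p - 1) := by
    rcases eq_or_ne δ 0 with rfl | hδ0
    · simp only [div_zero, abs_zero]; positivity
    rw [abs_div, div_le_iff₀ (abs_pos.mpr hδ0)]
    have := abs_rpow_sub_rpow_le (a := x + δ) (b := x) hp hx2 (by linarith [neg_abs_le δ])
      (by linarith)
    rwa [add_sub_cancel_left] at this
  have hderiv : |p * x ^ (p - 1)| ≤ |p| * (x / 2) ^ (p - 1) := by
    rw [abs_mul, abs_of_pos (rpow_pos_of_pos hx _)]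
    exact mul_le_mul_of_nonneg_left
      (rpow_le_rpow_of_nonpos hx2 (half_le_self hx.le) (sub_nonpos.mpr hp)) (abs_nonneg p)
  calc |((x + δ) ^ p - x ^ p) / δ - p * x ^ (p - 1)|
      ≤ |((x + δ) ^ p - x ^ p) / δ| + |p * x ^ (p - 1)| := abs_sub _ _
    _ ≤ 2 * |p| * (x / 2) ^ (p - 1) := by linarith
    _ = 2 * |p| * 2 ^ (1 - p) * x ^ (p - 1) := by rw [hhalf]; ring

lemma tendsto_rpow_slope {p x : ℝ} (hx : 0 < x) :
    Tendsto (fun δ => ((x + δ) ^ p - x ^ p) / δ) (𝓝[≠] 0) (𝓝 (p * x ^ (p - 1))) := by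
  have := hasDerivAt_iff_tendsto_slope_zero.mp (hasDerivAt_rpow_const (p := p) (Or.inl hx.ne'))
  simpa only [smul_eq_mul, inv_mul_eq_div] using this

theorem tendsto_integral_sq_rpow_slope_sub_deriv {p s t : ℝ} (hp : p < 1 / 2) (hst : s < t) :
    Tendsto (fun δ => ∫ q in Iio s,
        (((t + δ - q) ^ p - (t - q) ^ p) / δ - p * (t - q) ^ (p - 1)) ^ 2)
      (𝓝[≠] 0) (𝓝 0) := by
  set C := 2 * |p| * 2 ^ (1 - p)
  have hsmall : ∀ᶠ δ in 𝓝[≠] (0 : ℝ), |δ| ≤ (t - s) / 2 := by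
    have hr : 0 < (t - s) / 2 := by linarith
    filter_upwards [nhdsWithin_le_nhds (Metric.closedBall_mem_nhds (0 : ℝ) hr)] with δ hδ
    simpa [Real.dist_eq] using hδ
  have hbound : ∀ᶠ δ in 𝓝[≠] (0 : ℝ), ∀ᵐ q ∂(volume.restrict (Iio s)),
      ‖(((t + δ - q) ^ p - (t - q) ^ p) / δ - p * (t - q) ^ (p - 1)) ^ 2‖
        ≤ C ^ 2 * (t - q) ^ (2 * p - 2) := by
    filter_upwards [hsmall] with δ hδ
    refine (ae_restrict_iff' measurableSet_Iio).mpr (Eventually.of_forall fun q hq => ?_)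
    have hx : 0 < t - q := by linarith [mem_Iio.mp hq]
    have h := abs_rpow_slope_sub_deriv_le (p := p) (δ := δ) (by linarith) hx
      (by linarith [mem_Iio.mp hq])
    rw [add_sub_right_comm, norm_pow, norm_eq_abs, show 2 * p - 2 = (p - 1) * (2 : ℕ) by ring,
      rpow_mul_natCast hx.le, ← mul_pow]
    exact pow_le_pow_left₀ (abs_nonneg _) h 2
  have hlim : ∀ᵐ q ∂(volume.restrict (Iio s)), Tendsto (fun δ =>
      (((t + δ - q) ^ p - (t - q) ^ p) / δ - p * (t - q) ^ (p - 1)) ^ 2)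
      (𝓝[≠] 0) (𝓝 0) := by
    refine (ae_restrict_iff' measurableSet_Iio).mpr (Eventually.of_forall fun q hq => ?_)
    have hx : 0 < t - q := by linarith [mem_Iio.mp hq]
    have h := ((tendsto_rpow_slope (p := p) hx).sub_const (p * (t - q) ^ (p - 1))).pow 2
    simp_rw [add_sub_right_comm t _ q]
    simpa using h
  have hint : Integrable (fun q => C ^ 2 * (t - q) ^ (2 * p - 2)) (volume.restrict (Iio s)) :=
    (integrableOn_Iio_sub_rpow hst (by linarith)).const_mul _
  simpa only [integral_zero] using
    tendsto_integral_filter_of_dominated_convergence _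
      (Eventually.of_forall fun δ => by fun_prop) hbound hint hlim

theorem mean_square_differentiability_kernel (H : ℝ) (hH : H ∈ Set.Ioo (1/2 : ℝ) 1)
    (s t : ℝ) (hst : s < t) :
    Tendsto
      (fun δ : ℝ => ∫ q in Set.Iio s,
        (((t + δ - q) ^ (H - 1/2) - (t - q) ^ (H - 1/2)) / δ
          - (H - 1/2) * (t - q) ^ (H - 3/2))^2)
      (nhdsWithin 0 {δ : ℝ | δ ≠ 0 ∧ s < t + δ})
      (nhds 0) := by
  have h := tendsto_integral_sq_rpow_slope_sub_deriv (p := H - 1/2) (by linarith [hH.2]) hst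
  rw [show H - 1/2 - 1 = H - 3/2 by ring] at h
  exact h.mono_left (nhdsWithin_mono _ fun δ hδ => hδ.1)
end

section
/- Let Γ denote the Gamma function, let H ∈ (1/2, 1), set c_H = √(2H·Γ(3/2−H) / (Γ(1/2+H)·Γ(2−2H))), let s < T be real numbers, and let g ∈ L²(s, T). Define (G_H g)(τ) = c_H (H−1/2) ∫_τ^T (t−τ)^{H−3/2} g(t) dt for τ ∈ (s, T). Then G_H g ∈ L²(s, T) and ‖G_H g‖_{L²(s,T)} ≤ c_H (T−s)^{H−1/2} ‖g‖_{L²(s,T)}. -/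
/-!
Up to the factor `c_H (H - 1/2)`, `G_H` is the integral operator on `L²(s, T)` with the nonnegative
kernel `k(τ, t) = (t - τ)₊ ^ (H - 3/2)`. Its rows and columns both have `L¹(s, T)` mass at most
`M = (T - s) ^ (H - 1/2) / (H - 1/2)`, so Schur's test bounds its `L²` operator norm by `M`:
Cauchy–Schwarz against the weight `k(τ, ·)` gives `|∫ k f|² ≤ M ∫ k |f|²`, and integrating in `τ`
and swapping the integrals (Tonelli) gives `‖∫ k f‖² ≤ M² ‖f‖²`.
-/

open Real MeasureTheory Set

noncomputable def GH (H s T : ℝ) (g : ℝ → ℝ) (τ : ℝ) : ℝ :=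
  cH H * (H - 1/2) * ∫ t in Set.Ioc τ T, (t - τ) ^ (H - 3/2) * g t

open scoped ENNReal NNReal

namespace ENNReal

variable {α : Type*} [MeasurableSpace α] {μ : Measure α}

theorem sq_lintegral_mul_le {w f : α → ℝ≥0∞} (hw : AEMeasurable w μ) (hf : AEMeasurable f μ) :
    (∫⁻ a, w a * f a ∂μ) ^ 2 ≤ (∫⁻ a, w a ∂μ) * ∫⁻ a, w a * f a ^ 2 ∂μ := by
  have hsqrt : ∀ x : ℝ≥0∞, x ^ (1 / 2 : ℝ) * x ^ (1 / 2 : ℝ) = x := fun x => by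
    rw [← ENNReal.rpow_add_of_nonneg _ _ (by norm_num) (by norm_num)]
    norm_num
  have hpt : ∀ a, w a ^ (1 / 2 : ℝ) * (w a * f a ^ 2) ^ (1 / 2 : ℝ) = w a * f a := fun a => by
    rw [ENNReal.mul_rpow_of_nonneg _ _ (by norm_num), ← mul_assoc, hsqrt, ← ENNReal.rpow_natCast,
      ← ENNReal.rpow_mul]
    norm_num
  have holder := lintegral_mul_norm_pow_le (g := fun a => w a * f a ^ 2) hw
    (hw.mul (hf.pow_const 2)) (p := 1 / 2) (q := 1 / 2) (by norm_num) (by norm_num) (by norm_num)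
  simp only [hpt] at holder
  calc (∫⁻ a, w a * f a ∂μ) ^ 2
      ≤ ((∫⁻ a, w a ∂μ) ^ (1 / 2 : ℝ) * (∫⁻ a, w a * f a ^ 2 ∂μ) ^ (1 / 2 : ℝ)) ^ 2 := by
        gcongr
    _ = (∫⁻ a, w a ∂μ) * ∫⁻ a, w a * f a ^ 2 ∂μ := by
        rw [mul_pow, sq, sq, hsqrt, hsqrt]

end ENNReal

theorem eLpNorm_two_pow_two_eq_lintegral {α E : Type*} [MeasurableSpace α] {μ : Measure α}
    [ENorm E] (f : α → E) : eLpNorm f 2 μ ^ 2 = ∫⁻ x, ‖f x‖ₑ ^ 2 ∂μ := by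
  simpa using eLpNorm_nnreal_pow_eq_lintegral (μ := μ) (f := f) (p := 2) two_ne_zero

section SchurTest

variable {α β : Type*} [MeasurableSpace α] [MeasurableSpace β] {μ : Measure α} {ν : Measure β}
  [SFinite μ] [SFinite ν]

theorem lintegral_sq_lintegral_mul_le {K : α → β → ℝ≥0∞} (hK : Measurable (Function.uncurry K))
    {f : β → ℝ≥0∞} (hf : Measurable f) {A B : ℝ≥0∞}
    (hA : ∀ᵐ x ∂μ, ∫⁻ y, K x y ∂ν ≤ A) (hB : ∀ᵐ y ∂ν, ∫⁻ x, K x y ∂μ ≤ B) :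
    ∫⁻ x, (∫⁻ y, K x y * f y ∂ν) ^ 2 ∂μ ≤ A * B * ∫⁻ y, f y ^ 2 ∂ν := by
  have hKf : Measurable (Function.uncurry fun x y => K x y * f y ^ 2) :=
    hK.mul ((hf.comp measurable_snd).pow_const 2)
  calc ∫⁻ x, (∫⁻ y, K x y * f y ∂ν) ^ 2 ∂μ
      ≤ ∫⁻ x, A * ∫⁻ y, K x y * f y ^ 2 ∂ν ∂μ := by
        refine lintegral_mono_ae (hA.mono fun x hx => ?_)
        exact (ENNReal.sq_lintegral_mul_le hK.of_uncurry_left.aemeasurable hf.aemeasurable).trans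
          (by gcongr)
    _ = A * ∫⁻ y, ∫⁻ x, K x y * f y ^ 2 ∂μ ∂ν := by
        have hmeas : Measurable fun x => ∫⁻ y, K x y * f y ^ 2 ∂ν := hKf.lintegral_prod_right'
        rw [lintegral_const_mul _ hmeas, lintegral_lintegral_swap hKf.aemeasurable]
    _ = A * ∫⁻ y, (∫⁻ x, K x y ∂μ) * f y ^ 2 ∂ν := by
        simp_rw [lintegral_mul_const _ hK.of_uncurry_right]
    _ ≤ A * ∫⁻ y, B * f y ^ 2 ∂ν := by
        gcongr A * ?_
        exact lintegral_mono_ae (hB.mono fun y hy => by gcongr)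
    _ = A * B * ∫⁻ y, f y ^ 2 ∂ν := by
        rw [lintegral_const_mul _ (hf.pow_const 2), mul_assoc]

variable {E : Type*} [NormedAddCommGroup E] [NormedSpace ℝ E] {k : α → β → ℝ} {A B : ℝ≥0}

theorem eLpNorm_integral_smul_le (hk : Measurable (Function.uncurry k))
    (hA : ∀ᵐ x ∂μ, ∫⁻ y, ‖k x y‖ₑ ∂ν ≤ A) (hB : ∀ᵐ y ∂ν, ∫⁻ x, ‖k x y‖ₑ ∂μ ≤ B)
    {f : β → E} (hf : AEStronglyMeasurable f ν) :
    eLpNorm (fun x => ∫ y, k x y • f y ∂ν) 2 μ ≤ NNReal.sqrt (A * B) * eLpNorm f 2 ν := by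
  obtain ⟨f', hf', hff'⟩ := hf
  have hint : (fun x => ∫ y, k x y • f y ∂ν) = fun x => ∫ y, k x y • f' y ∂ν :=
    funext fun x => integral_congr_ae (hff'.mono fun y hy => by simp only [hy])
  rw [hint, eLpNorm_congr_ae hff', ← ENNReal.pow_le_pow_left_iff two_ne_zero, mul_pow,
    eLpNorm_two_pow_two_eq_lintegral, eLpNorm_two_pow_two_eq_lintegral, ← ENNReal.coe_pow,
    NNReal.sq_sqrt, ENNReal.coe_mul]
  calc ∫⁻ x, ‖∫ y, k x y • f' y ∂ν‖ₑ ^ 2 ∂μ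
      ≤ ∫⁻ x, (∫⁻ y, ‖k x y‖ₑ * ‖f' y‖ₑ ∂ν) ^ 2 ∂μ := by
        gcongr with x
        simpa only [enorm_smul] using enorm_integral_le_lintegral_enorm fun y => k x y • f' y
    _ ≤ A * B * ∫⁻ y, ‖f' y‖ₑ ^ 2 ∂ν :=
        lintegral_sq_lintegral_mul_le hk.enorm hf'.enorm hA hB

theorem memLp_integral_smul (hk : Measurable (Function.uncurry k))
    (hA : ∀ᵐ x ∂μ, ∫⁻ y, ‖k x y‖ₑ ∂ν ≤ A) (hB : ∀ᵐ y ∂ν, ∫⁻ x, ‖k x y‖ₑ ∂μ ≤ B)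
    {f : β → E} (hf : MemLp f 2 ν) : MemLp (fun x => ∫ y, k x y • f y ∂ν) 2 μ :=
  ⟨(hk.aestronglyMeasurable.smul hf.1.comp_snd).integral_prod_right',
    (eLpNorm_integral_smul_le hk hA hB hf.1).trans_lt (ENNReal.mul_lt_top ENNReal.coe_lt_top hf.2)⟩

end SchurTest

section RiemannLiouville

theorem lintegral_Ioo_ofReal_rpow {a c : ℝ} (ha : -1 < a) (hc : 0 ≤ c) :
    ∫⁻ x in Ioo 0 c, ENNReal.ofReal (x ^ a) = ENNReal.ofReal (c ^ (a + 1) / (a + 1)) := by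
  have hint : IntegrableOn (fun x : ℝ => x ^ a) (Ioo 0 c) :=
    ((intervalIntegrable_iff_integrableOn_Ioc_of_le hc).1
      (intervalIntegral.intervalIntegrable_rpow' ha)).mono_set Ioo_subset_Ioc_self
  rw [← ofReal_integral_eq_lintegral_ofReal hint, ← integral_Ioc_eq_integral_Ioo,
    ← intervalIntegral.integral_of_le hc, integral_rpow (Or.inl ha),
    zero_rpow (by linarith), sub_zero]
  filter_upwards [ae_restrict_mem measurableSet_Ioo] with x hx
  exact rpow_nonneg hx.1.le a

variable {a u v : ℝ}

theorem lintegral_Ioo_ofReal_rpow_sub_left (ha : -1 < a) (huv : u ≤ v) :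
    ∫⁻ t in Ioo u v, ENNReal.ofReal ((t - u) ^ a) =
      ENNReal.ofReal ((v - u) ^ (a + 1) / (a + 1)) := by
  have hpre : (fun t => t - u) ⁻¹' Ioo 0 (v - u) = Ioo u v := by
    rw [preimage_sub_const_Ioo, zero_add, sub_add_cancel]
  rw [← lintegral_Ioo_ofReal_rpow ha (sub_nonneg.2 huv), ← hpre]
  exact (measurePreserving_sub_right volume u).setLIntegral_comp_preimage measurableSet_Ioo
    (f := fun x => ENNReal.ofReal (x ^ a)) (by fun_prop)

theorem lintegral_Ioo_ofReal_rpow_sub_right (ha : -1 < a) (huv : u ≤ v) :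
    ∫⁻ t in Ioo u v, ENNReal.ofReal ((v - t) ^ a) =
      ENNReal.ofReal ((v - u) ^ (a + 1) / (a + 1)) := by
  have hpre : (fun t => v - t) ⁻¹' Ioo 0 (v - u) = Ioo u v := by
    rw [preimage_const_sub_Ioo, sub_sub_cancel, sub_zero]
  rw [← lintegral_Ioo_ofReal_rpow ha (sub_nonneg.2 huv), ← hpre]
  exact (Measure.measurePreserving_sub_left volume v).setLIntegral_comp_preimage measurableSet_Ioo
    (f := fun x => ENNReal.ofReal (x ^ a)) (by fun_prop)

-- The `if` matters: `Real.rpow` of a negative base is not zero.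
noncomputable def riemannLiouvilleKernel (a τ t : ℝ) : ℝ :=
  if τ < t then (t - τ) ^ a else 0

theorem measurable_riemannLiouvilleKernel (a : ℝ) :
    Measurable (Function.uncurry (riemannLiouvilleKernel a)) :=
  Measurable.ite (measurableSet_lt measurable_fst measurable_snd)
    ((measurable_snd.sub measurable_fst).pow_const a) measurable_const

theorem enorm_riemannLiouvilleKernel (a τ t : ℝ) :
    ‖riemannLiouvilleKernel a τ t‖ₑ = if τ < t then ENNReal.ofReal ((t - τ) ^ a) else 0 := by
  unfold riemannLiouvilleKernel
  split_ifs with h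
  · exact Real.enorm_of_nonneg (rpow_nonneg (sub_nonneg.2 h.le) a)
  · exact enorm_zero

variable {s T : ℝ}

theorem setLIntegral_riemannLiouvilleKernel_row_le (ha : -1 < a) {τ : ℝ} (hsτ : s ≤ τ)
    (hτT : τ ≤ T) :
    ∫⁻ t in Ioo s T, ‖riemannLiouvilleKernel a τ t‖ₑ ≤
      ENNReal.ofReal ((T - s) ^ (a + 1) / (a + 1)) := by
  have hind : ∀ t, ‖riemannLiouvilleKernel a τ t‖ₑ =
      (Ioi τ).indicator (fun t => ENNReal.ofReal ((t - τ) ^ a)) t := fun t => by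
    simp only [enorm_riemannLiouvilleKernel, indicator_apply, mem_Ioi]
  simp_rw [hind]
  rw [setLIntegral_indicator measurableSet_Ioi, inter_comm, Ioo_inter_Ioi, max_eq_right hsτ,
    lintegral_Ioo_ofReal_rpow_sub_left ha hτT]
  gcongr <;> linarith

theorem setLIntegral_riemannLiouvilleKernel_col_le (ha : -1 < a) {t : ℝ} (hst : s ≤ t)
    (htT : t ≤ T) :
    ∫⁻ τ in Ioo s T, ‖riemannLiouvilleKernel a τ t‖ₑ ≤
      ENNReal.ofReal ((T - s) ^ (a + 1) / (a + 1)) := by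
  have hind : ∀ τ, ‖riemannLiouvilleKernel a τ t‖ₑ =
      (Iio t).indicator (fun τ => ENNReal.ofReal ((t - τ) ^ a)) τ := fun τ => by
    simp only [enorm_riemannLiouvilleKernel, indicator_apply, mem_Iio]
  simp_rw [hind]
  rw [setLIntegral_indicator measurableSet_Iio, inter_comm, Ioo_inter_Iio, min_eq_right htT,
    lintegral_Ioo_ofReal_rpow_sub_right ha hst]
  gcongr <;> linarith

theorem setIntegral_riemannLiouvilleKernel_smul (a : ℝ) {τ : ℝ} (hsτ : s ≤ τ) (g : ℝ → ℝ) :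
    ∫ t in Ioo s T, riemannLiouvilleKernel a τ t • g t = ∫ t in Ioc τ T, (t - τ) ^ a * g t := by
  have hind : ∀ t, riemannLiouvilleKernel a τ t • g t =
      (Ioi τ).indicator (fun t => (t - τ) ^ a * g t) t := fun t => by
    simp only [riemannLiouvilleKernel, smul_eq_mul, indicator_apply, mem_Ioi, ite_mul, zero_mul]
  simp_rw [hind]
  rw [setIntegral_indicator measurableSet_Ioi, Ioo_inter_Ioi, max_eq_right hsτ,
    integral_Ioc_eq_integral_Ioo]

end RiemannLiouville

theorem GH_ae_eq_smul_integral_riemannLiouvilleKernel (H s T : ℝ) (g : ℝ → ℝ) :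
    GH H s T g =ᵐ[volume.restrict (Ioo s T)]
      (cH H * (H - 1/2)) • fun τ => ∫ t in Ioo s T, riemannLiouvilleKernel (H - 3/2) τ t • g t := by
  filter_upwards [ae_restrict_mem measurableSet_Ioo] with τ hτ
  rw [GH, ← setIntegral_riemannLiouvilleKernel_smul _ hτ.1.le]
  rfl

theorem GH_bound_general (H : ℝ) (hH : H ∈ Set.Ioo (1/2 : ℝ) 1) (s T : ℝ)
    (g : ℝ → ℝ) (hg : MeasureTheory.MemLp g 2 (volume.restrict (Set.Ioo s T))) :
    MeasureTheory.MemLp (GH H s T g) 2 (volume.restrict (Set.Ioo s T)) ∧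
    eLpNorm (GH H s T g) 2 (volume.restrict (Set.Ioo s T))
      ≤ ENNReal.ofReal (cH H * (T - s) ^ (H - 1/2)) *
        eLpNorm g 2 (volume.restrict (Set.Ioo s T)) := by
  have ha : -1 < H - 3/2 := by linarith [hH.1]
  have hc : 0 ≤ cH H * (H - 1/2) := mul_nonneg (Real.sqrt_nonneg _) (by linarith [hH.1])
  set M : ℝ≥0 := ((T - s) ^ (H - 3/2 + 1) / (H - 3/2 + 1)).toNNReal
  have hκ := measurable_riemannLiouvilleKernel (H - 3/2)
  have hrow : ∀ᵐ τ ∂volume.restrict (Ioo s T),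
      ∫⁻ t in Ioo s T, ‖riemannLiouvilleKernel (H - 3/2) τ t‖ₑ ≤ M := by
    filter_upwards [ae_restrict_mem measurableSet_Ioo] with τ hτ
      using setLIntegral_riemannLiouvilleKernel_row_le ha hτ.1.le hτ.2.le
  have hcol : ∀ᵐ t ∂volume.restrict (Ioo s T),
      ∫⁻ τ in Ioo s T, ‖riemannLiouvilleKernel (H - 3/2) τ t‖ₑ ≤ M := by
    filter_upwards [ae_restrict_mem measurableSet_Ioo] with t ht
      using setLIntegral_riemannLiouvilleKernel_col_le ha ht.1.le ht.2.le
  have hGH := GH_ae_eq_smul_integral_riemannLiouvilleKernel H s T g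
  refine ⟨((memLp_integral_smul hκ hrow hcol hg).const_smul _).ae_eq hGH.symm, ?_⟩
  calc eLpNorm (GH H s T g) 2 (volume.restrict (Ioo s T))
      ≤ ‖cH H * (H - 1/2)‖ₑ * (NNReal.sqrt (M * M) * eLpNorm g 2 (volume.restrict (Ioo s T))) := by
        rw [eLpNorm_congr_ae hGH, eLpNorm_const_smul]
        gcongr
        exact eLpNorm_integral_smul_le hκ hrow hcol hg.1
    _ = ENNReal.ofReal (cH H * (T - s) ^ (H - 1/2)) * eLpNorm g 2 (volume.restrict (Ioo s T)) := by
        have hM : (M : ℝ≥0∞) = ENNReal.ofReal ((T - s) ^ (H - 1/2) / (H - 1/2)) := by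
          rw [show H - 1/2 = H - 3/2 + 1 by ring]
          rfl
        rw [NNReal.sqrt_mul_self, ← mul_assoc, Real.enorm_of_nonneg hc, hM, ← ENNReal.ofReal_mul hc,
          mul_assoc, mul_div_cancel₀ _ (by linarith [hH.1])]

theorem GH_bound (H : ℝ) (hH : H ∈ Set.Ioo (1/2 : ℝ) 1) (s T : ℝ) (hsT : s < T)
    (g : ℝ → ℝ) (hg : MeasureTheory.MemLp g 2 (volume.restrict (Set.Ioo s T))) :
    MeasureTheory.MemLp (GH H s T g) 2 (volume.restrict (Set.Ioo s T)) ∧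
    eLpNorm (GH H s T g) 2 (volume.restrict (Set.Ioo s T))
      ≤ ENNReal.ofReal (cH H * (T - s) ^ (H - 1/2)) *
        eLpNorm g 2 (volume.restrict (Set.Ioo s T)) :=
  GH_bound_general H hH s T g hg
end

section
/- Let s < T be real numbers, let γ ∈ (1/2, 1], and let x : [s, T] → ℝ be Hölder continuous of exponent γ, i.e. there is C ≥ 0 with |x(u) − x(v)| ≤ C|u − v|^γ for all u, v ∈ [s, T]. Then for every sequence of partitions s = t_0^{(m)} < t_1^{(m)} < … < t_{n_m}^{(m)} = T whose mesh max_k (t_{k+1}^{(m)} − t_k^{(m)}) tends to 0 as m → ∞, the left Riemann sums Σ_{k=0}^{n_m − 1} 2 (x(t_k^{(m)}) − x(s)) (x(t_{k+1}^{(m)}) − x(t_k^{(m)})) converge to (x(T) − x(s))². -/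
/-!
A telescoping sum turns the left Riemann sum into `(x T - x s)² - ∑ (Δx)²`, so it suffices that
the discrete quadratic variation `∑ (Δx)²` vanishes in the limit. Hölder continuity gives
`(Δx)² ≤ C² (Δt)^(2γ) ≤ C² δ^(2γ-1) Δt` on a partition of mesh `δ`, hence
`∑ (Δx)² ≤ C² δ^(2γ-1) (T - s)`, which tends to `0` with `δ` because `2γ - 1 > 0`.
-/

open Real Filter Set

open Finset in
theorem sum_range_two_mul_sub_mul_sub {R : Type*} [CommRing R] (a : ℕ → R) (n : ℕ) :
    ∑ k ∈ range n, 2 * (a k - a 0) * (a (k + 1) - a k) =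
      (a n - a 0) ^ 2 - ∑ k ∈ range n, (a (k + 1) - a k) ^ 2 := by
  have hterm : ∀ k, 2 * (a k - a 0) * (a (k + 1) - a k) =
      ((a (k + 1) - a 0) ^ 2 - (a k - a 0) ^ 2) - (a (k + 1) - a k) ^ 2 := fun k => by ring
  simp only [hterm, sum_sub_distrib, sum_range_sub (fun k => (a k - a 0) ^ 2)]
  ring

theorem mem_Icc_of_forall_le_succ {α : Type*} [Preorder α] {t : ℕ → α} {n : ℕ} (ht : ∀ k < n, t k ≤ t (k + 1))
    {k : ℕ} (hk : k ≤ n) : t k ∈ Icc (t 0) (t n) := by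
  have hmono : MonotoneOn t (Iic n) :=
    monotoneOn_of_le_add_one ordConnected_Iic fun j _ _ hj => ht j hj
  exact ⟨hmono (Nat.zero_le n) hk (Nat.zero_le k), hmono hk (mem_Iic.2 le_rfl) hk⟩

theorem sq_le_of_abs_le_mul_rpow {y C d δ γ : ℝ} (hγ : 1 / 2 ≤ γ) (hd : 0 ≤ d) (hdδ : d ≤ δ)
    (hy : |y| ≤ C * d ^ γ) : y ^ 2 ≤ C ^ 2 * δ ^ (2 * γ - 1) * d := by
  have hsq : (d ^ γ) ^ 2 = d ^ (2 * γ - 1) * d := by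
    rw [← rpow_natCast, ← rpow_mul hd, ← rpow_add_one' hd (by linarith : 2 * γ - 1 + 1 ≠ 0)]
    ring_nf
  calc y ^ 2 = |y| ^ 2 := (sq_abs y).symm
    _ ≤ (C * d ^ γ) ^ 2 := pow_le_pow_left₀ (abs_nonneg y) hy 2
    _ = C ^ 2 * (d ^ (2 * γ - 1) * d) := by rw [mul_pow, hsq]
    _ ≤ C ^ 2 * (δ ^ (2 * γ - 1) * d) := by
      gcongr
      linarith
    _ = C ^ 2 * δ ^ (2 * γ - 1) * d := by ring

open Finset in
theorem sum_sq_sub_le_of_abs_sub_le_rpow {y a : ℕ → ℝ} {n : ℕ} {C γ δ : ℝ} (hγ : 1 / 2 ≤ γ)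
    (ha : ∀ k < n, a k ≤ a (k + 1)) (hδ : ∀ k < n, a (k + 1) - a k ≤ δ)
    (hy : ∀ k < n, |y (k + 1) - y k| ≤ C * (a (k + 1) - a k) ^ γ) :
    ∑ k ∈ range n, (y (k + 1) - y k) ^ 2 ≤ C ^ 2 * δ ^ (2 * γ - 1) * (a n - a 0) :=
  calc ∑ k ∈ range n, (y (k + 1) - y k) ^ 2
      ≤ ∑ k ∈ range n, C ^ 2 * δ ^ (2 * γ - 1) * (a (k + 1) - a k) := by
        refine sum_le_sum fun k hk => ?_
        rw [Finset.mem_range] at hk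
        exact sq_le_of_abs_le_mul_rpow hγ (sub_nonneg.2 (ha k hk)) (hδ k hk) (hy k hk)
    _ = C ^ 2 * δ ^ (2 * γ - 1) * (a n - a 0) := by rw [← mul_sum, sum_range_sub]

theorem tendsto_sum_sq_sub_zero_of_holder {x : ℝ → ℝ} {s T C γ : ℝ} (hγ : 1 / 2 < γ)
    (hx : ∀ u ∈ Icc s T, ∀ v ∈ Icc s T, |x u - x v| ≤ C * |u - v| ^ γ)
    {n : ℕ → ℕ} {t : ℕ → ℕ → ℝ} (ht0 : ∀ m, t m 0 = s) (htn : ∀ m, t m (n m) = T)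
    (hmono : ∀ m, ∀ k < n m, t m k ≤ t m (k + 1))
    (hmesh : ∀ ε > 0, ∃ M, ∀ m ≥ M, ∀ k < n m, t m (k + 1) - t m k < ε) :
    Tendsto (fun m => ∑ k ∈ Finset.range (n m), (x (t m (k + 1)) - x (t m k)) ^ 2)
      atTop (nhds 0) := by
  have hbound : ∀ δ > 0, ∀ᶠ m in atTop,
      ∑ k ∈ Finset.range (n m), (x (t m (k + 1)) - x (t m k)) ^ 2 ≤
        C ^ 2 * δ ^ (2 * γ - 1) * (T - s) := by
    intro δ hδ
    obtain ⟨M, hM⟩ := hmesh δ hδ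
    filter_upwards [eventually_ge_atTop M] with m hm
    have hmem : ∀ k ≤ n m, t m k ∈ Icc s T := fun k hk => by
      simpa only [ht0, htn] using mem_Icc_of_forall_le_succ (hmono m) hk
    have hincr : ∀ k < n m, |x (t m (k + 1)) - x (t m k)| ≤ C * (t m (k + 1) - t m k) ^ γ :=
      fun k hk => by
        simpa only [abs_of_nonneg (sub_nonneg.2 (hmono m k hk))] using
          hx _ (hmem (k + 1) hk) _ (hmem k hk.le)
    simpa only [ht0, htn] using sum_sq_sub_le_of_abs_sub_le_rpow (y := fun k => x (t m k)) hγ.le (hmono m)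
      (fun k hk => (hM m hm k hk).le) hincr
  have hsmall : Tendsto (fun δ => C ^ 2 * δ ^ (2 * γ - 1) * (T - s)) (nhdsWithin 0 (Ioi 0))
      (nhds 0) := by
    have hcont := ((continuousAt_rpow_const 0 (2 * γ - 1) (Or.inr (by linarith))).tendsto
      |>.const_mul (C ^ 2)).mul_const (T - s)
    simpa [zero_rpow (by linarith : 2 * γ - 1 ≠ 0)] using hcont.mono_left nhdsWithin_le_nhds
  refine tendsto_order.2 ⟨fun a ha => Eventually.of_forall fun m =>
    ha.trans_le (Finset.sum_nonneg fun _ _ => sq_nonneg _), fun ε hε => ?_⟩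
  obtain ⟨δ, hδε, hδ⟩ := ((hsmall.eventually (gt_mem_nhds hε)).and self_mem_nhdsWithin).exists
  exact (hbound δ hδ).mono fun m hm => hm.trans_lt hδε

theorem riemann_sums_square_identity_general
    (s T : ℝ) (γ : ℝ) (hγ : γ ∈ Set.Ioc (1/2 : ℝ) 1)
    (x : ℝ → ℝ) (C : ℝ)
    (hx : ∀ u ∈ Set.Icc s T, ∀ v ∈ Set.Icc s T, |x u - x v| ≤ C * |u - v| ^ γ)
    (n : ℕ → ℕ) (t : ℕ → ℕ → ℝ)
    (ht0 : ∀ m, t m 0 = s) (htn : ∀ m, t m (n m) = T)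
    (hmono : ∀ m, ∀ k < n m, t m k < t m (k + 1))
    (hmesh : ∀ ε > 0, ∃ M, ∀ m ≥ M, ∀ k < n m, t m (k + 1) - t m k < ε) :
    Tendsto
      (fun m => ∑ k ∈ Finset.range (n m),
        2 * (x (t m k) - x s) * (x (t m (k + 1)) - x (t m k)))
      atTop (nhds ((x T - x s)^2)) := by
  have hvariation := tendsto_sum_sq_sub_zero_of_holder hγ.1 hx ht0 htn
    (fun m k hk => (hmono m k hk).le) hmesh
  have hsum : ∀ m, ∑ k ∈ Finset.range (n m),
      2 * (x (t m k) - x s) * (x (t m (k + 1)) - x (t m k)) =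
        (x T - x s) ^ 2 - ∑ k ∈ Finset.range (n m), (x (t m (k + 1)) - x (t m k)) ^ 2 :=
    fun m => by simpa only [ht0, htn] using sum_range_two_mul_sub_mul_sub (fun k => x (t m k)) (n m)
  simp only [hsum]
  simpa using tendsto_const_nhds.sub hvariation

theorem riemann_sums_square_identity
    (s T : ℝ) (hsT : s < T) (γ : ℝ) (hγ : γ ∈ Set.Ioc (1/2 : ℝ) 1)
    (x : ℝ → ℝ) (C : ℝ) (hC : 0 ≤ C)
    (hx : ∀ u ∈ Set.Icc s T, ∀ v ∈ Set.Icc s T, |x u - x v| ≤ C * |u - v| ^ γ)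
    (n : ℕ → ℕ) (t : ℕ → ℕ → ℝ)
    (ht0 : ∀ m, t m 0 = s) (htn : ∀ m, t m (n m) = T)
    (hmono : ∀ m, ∀ k < n m, t m k < t m (k + 1))
    (hmesh : ∀ ε > 0, ∃ M, ∀ m ≥ M, ∀ k < n m, t m (k + 1) - t m k < ε) :
    Tendsto
      (fun m => ∑ k ∈ Finset.range (n m),
        2 * (x (t m k) - x s) * (x (t m (k + 1)) - x (t m k)))
      atTop (nhds ((x T - x s)^2)) :=
  riemann_sums_square_identity_general s T γ hγ x C hx n t ht0 htn hmono hmesh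
end
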